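/- Let n ∈ ℤ^+, ℓ > 0, and let R₁, R₂ ⊆ ℤ^d be finite regions with max(|∂R₁|, |∂R₂|) ≤ n. If B_ℓ(R₁) = B_ℓ(R₂), then for the metric d(R₁,R₂) = ν|R₁ Δ R₂|^{1/2} one has d(R₁,R₂) ≤ ν b₃ 2^{ℓ/2} n^{1/2} with b₃ = 2(√2+1)√(2b₂), where b₂ = b₂(d) is the constant in the coarse-graining increment bound |B_j(R) Δ B_{j−1}(R)| ≤ b₂ 2^j |∂R|. -/

import Mathlib

/-- Points of the lattice `ℤ^d`. -/
abbrev Pt (d : ℕ) := Fin d → ℤ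

/-- Two lattice points are adjacent if they are distinct and at `L^∞`-distance at most 1
(i.e. exactly 1). -/
def adj {d : ℕ} (s t : Pt d) : Prop := s ≠ t ∧ ∀ i, |s i - t i| ≤ 1

/-- A set `R ⊆ ℤ^d` is connected if any two of its points are joined by a path inside `R`
whose consecutive points are at `L^∞`-distance 1. -/
def connectedIn {d : ℕ} (R : Set (Pt d)) : Prop :=
  ∀ s ∈ R, ∀ t ∈ R, Relation.ReflTransGen (fun a b => a ∈ R ∧ b ∈ R ∧ adj a b) s t

/-- The external boundary `∂R = {s ∉ R : dist_∞(s, R) = 1}`. -/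
def extBoundary {d : ℕ} (R : Set (Pt d)) : Set (Pt d) :=
  {s | s ∉ R ∧ ∃ t ∈ R, adj s t}

/-- The interior `Int R`: the union of the finite connected components of the complement. -/
def latticeInt {d : ℕ} (R : Set (Pt d)) : Set (Pt d) :=
  {s | s ∉ R ∧
    Set.Finite {t | Relation.ReflTransGen (fun a b => a ∉ R ∧ b ∉ R ∧ adj a b) s t}}

/-- The `ℓ`-cube based at `2^ℓ s`: `(∏_i [2^ℓ s_i, 2^ℓ (s_i+1))) ∩ ℤ^d`. -/
def cube {d : ℕ} (ℓ : ℕ) (s : Pt d) : Set (Pt d) :=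
  {t | ∀ i, 2 ^ ℓ * s i ≤ t i ∧ t i < 2 ^ ℓ * (s i + 1)}

/-- The coarse-grained region `B_ℓ(R)`: the union of all `ℓ`-cubes containing at least half
of their `2^{ℓ d}` points in `R`. -/
def coarse {d : ℕ} (ℓ : ℕ) (R : Set (Pt d)) : Set (Pt d) :=
  ⋃ s ∈ {s : Pt d | 2 ^ (ℓ * d) ≤ 2 * (cube ℓ s ∩ R).ncard}, cube ℓ s

/-!
Since `B_ℓ(R₁) = B_ℓ(R₂)`, the triangle inequality for `√|A Δ B|` through this common coarse
region reduces the claim to bounding `√|R Δ B_ℓ(R)|` for each `Rᵢ`. Telescoping along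
`R = B₀(R), B₁(R), …, B_ℓ(R)` and using the increment bound, this is at most
`Σ_{j=1}^ℓ √(b₂ 2^j n)`, a geometric series with ratio `√2` whose sum is at most
`√(2 b₂) (√2 + 1) 2^{ℓ/2} √n`, because `1 / (√2 - 1) = √2 + 1`.
-/

open Finset

lemma cube_finite {d : ℕ} (ℓ : ℕ) (s : Pt d) : (cube ℓ s).Finite :=
  (Set.Finite.pi fun i => Set.finite_Icc (2 ^ ℓ * s i) (2 ^ ℓ * (s i + 1))).subset
    fun _ ht i _ => ⟨(ht i).1, (ht i).2.le⟩

lemma eq_ediv_of_mem_cube {d ℓ : ℕ} {s t : Pt d} (ht : t ∈ cube ℓ s) :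
    s = fun i => t i / 2 ^ ℓ := by
  funext i
  have h2 : (0 : ℤ) < 2 ^ ℓ := by positivity
  have hle : s i ≤ t i / 2 ^ ℓ := by
    rw [Int.le_ediv_iff_mul_le h2]; linarith [(ht i).1]
  have hlt : t i / 2 ^ ℓ < s i + 1 := by
    rw [Int.ediv_lt_iff_lt_mul h2]; linarith [(ht i).2]
  omega

lemma coarse_finite {d : ℕ} (ℓ : ℕ) {R : Set (Pt d)} (hR : R.Finite) :
    (coarse ℓ R).Finite := by
  refine (hR.biUnion fun t _ => cube_finite ℓ fun i => t i / 2 ^ ℓ).subset ?_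
  simp only [coarse, Set.iUnion_subset_iff]
  intro s hs x hxs
  obtain ⟨t, htc, htR⟩ : (cube ℓ s ∩ R).Nonempty := by
    apply Set.nonempty_of_ncard_ne_zero
    have : 0 < 2 ^ (ℓ * d) := Nat.pow_pos two_pos
    simp only [Set.mem_ofPred_eq] at hs
    omega
  exact Set.mem_biUnion htR (eq_ediv_of_mem_cube htc ▸ hxs)

lemma cube_zero {d : ℕ} (s : Pt d) : cube 0 s = {s} := by
  ext t
  simp only [cube, Set.mem_ofPred_eq, Set.mem_singleton_iff, pow_zero, one_mul]
  constructor
  · intro h; funext i; have := h i; omega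
  · rintro rfl i; omega

lemma coarse_zero {d : ℕ} (R : Set (Pt d)) : coarse 0 R = R := by
  ext x
  simp only [coarse, cube_zero, Nat.zero_mul, pow_zero, Set.mem_iUnion, Set.mem_ofPred_eq,
    Set.mem_singleton_iff, exists_prop]
  by_cases hx : x ∈ R
  · simp [hx, Set.singleton_inter_of_mem hx]
  · simp [hx, Set.singleton_inter_eq_empty.mpr hx]

lemma Real.sqrt_add_le_add_sqrt {x y : ℝ} (hx : 0 ≤ x) (hy : 0 ≤ y) : √(x + y) ≤ √x + √y :=
  Real.sqrt_le_iff.mpr ⟨by positivity, by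
    nlinarith [Real.sq_sqrt hx, Real.sq_sqrt hy, Real.sqrt_nonneg x, Real.sqrt_nonneg y]⟩

section SymmDiffMetric

variable {α : Type*}

lemma sqrt_ncard_symmDiff_le {A B C : Set α}
    (hAB : (symmDiff A B).Finite) (hBC : (symmDiff B C).Finite) :
    √(symmDiff A C).ncard ≤ √(symmDiff A B).ncard + √(symmDiff B C).ncard := by
  have hcard : (symmDiff A C).ncard ≤ (symmDiff A B).ncard + (symmDiff B C).ncard :=
    (Set.ncard_le_ncard (symmDiff_triangle A B C) (hAB.union hBC)).trans (Set.ncard_union_le _ _)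
  calc √(symmDiff A C).ncard
      ≤ √((symmDiff A B).ncard + (symmDiff B C).ncard : ℝ) :=
        Real.sqrt_le_sqrt (by exact_mod_cast hcard)
    _ ≤ _ := Real.sqrt_add_le_add_sqrt (by positivity) (by positivity)

lemma sqrt_ncard_symmDiff_le_sum {A : ℕ → Set α} (hA : ∀ j, (A j).Finite) (ℓ : ℕ) :
    √(symmDiff (A 0) (A ℓ)).ncard ≤
      ∑ j ∈ range ℓ, √(symmDiff (A j) (A (j + 1))).ncard := by
  induction ℓ with
  | zero => simp
  | succ ℓ ih =>
    rw [sum_range_succ]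
    exact (sqrt_ncard_symmDiff_le ((hA 0).symmDiff (hA ℓ)) ((hA ℓ).symmDiff (hA (ℓ + 1)))).trans
      (by gcongr)

end SymmDiffMetric

lemma sum_range_sqrt_two_pow_succ (m : ℕ) :
    ∑ j ∈ range m, √2 ^ (j + 1) = √2 * (√2 + 1) * (√2 ^ m - 1) := by
  have hs : √2 ^ 2 = 2 := Real.sq_sqrt zero_le_two
  induction m with
  | zero => simp
  | succ m ih =>
    rw [sum_range_succ, ih]
    linear_combination (-(√2 ^ m * √2)) * hs

lemma sum_range_sqrt_mul_two_pow_succ_le (c : ℝ) (ℓ : ℕ) :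
    ∑ j ∈ range ℓ, √(c * 2 ^ (j + 1)) ≤ √(2 * c) * (√2 + 1) * (2 : ℝ) ^ ((ℓ : ℝ) / 2) := by
  have hterm : ∀ j : ℕ, √(c * 2 ^ (j + 1)) = √c * √2 ^ (j + 1) := fun j => by
    have hsq : (√2 ^ (j + 1)) ^ 2 = 2 ^ (j + 1) := by
      rw [← pow_mul, mul_comm, pow_mul, Real.sq_sqrt zero_le_two]
    rw [Real.sqrt_mul' c (by positivity), ← hsq, Real.sqrt_sq (by positivity)]
  rw [Real.rpow_div_two_eq_sqrt _ zero_le_two, Real.rpow_natCast,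
    Real.sqrt_mul zero_le_two, sum_congr rfl fun j _ => hterm j, ← mul_sum,
    sum_range_sqrt_two_pow_succ]
  have : 0 ≤ √c * (√2 * (√2 + 1)) := by positivity
  nlinarith

lemma sqrt_ncard_symmDiff_coarse_le {d : ℕ} {b₂ : ℝ} (hb₂ : 0 ≤ b₂) {R : Set (Pt d)}
    (hR : R.Finite)
    (hincr : ∀ j : ℕ, 1 ≤ j →
      ((symmDiff (coarse j R) (coarse (j - 1) R)).ncard : ℝ)
        ≤ b₂ * 2 ^ j * (extBoundary R).ncard)
    {n : ℕ} (hn : (extBoundary R).ncard ≤ n) (ℓ : ℕ) :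
    √(symmDiff R (coarse ℓ R)).ncard
      ≤ √(2 * b₂) * (√2 + 1) * (2 : ℝ) ^ ((ℓ : ℝ) / 2) * √n := by
  have hstep : ∀ j,
      √(symmDiff (coarse j R) (coarse (j + 1) R)).ncard ≤ √(b₂ * n * 2 ^ (j + 1)) :=
    fun j => Real.sqrt_le_sqrt <| by
      have hn' : ((extBoundary R).ncard : ℝ) ≤ n := by exact_mod_cast hn
      have := hincr (j + 1) (Nat.le_add_left 1 j)
      rw [Nat.add_sub_cancel, symmDiff_comm] at this
      nlinarith [mul_le_mul_of_nonneg_left hn' (by positivity : (0 : ℝ) ≤ b₂ * 2 ^ (j + 1))]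
  calc √(symmDiff R (coarse ℓ R)).ncard
      ≤ ∑ j ∈ range ℓ, √(symmDiff (coarse j R) (coarse (j + 1) R)).ncard := by
        simpa only [coarse_zero] using
          sqrt_ncard_symmDiff_le_sum (A := fun j => coarse j R) (coarse_finite · hR) ℓ
    _ ≤ ∑ j ∈ range ℓ, √(b₂ * n * 2 ^ (j + 1)) := sum_le_sum fun j _ => hstep j
    _ ≤ √(2 * (b₂ * n)) * (√2 + 1) * (2 : ℝ) ^ ((ℓ : ℝ) / 2) :=
        sum_range_sqrt_mul_two_pow_succ_le _ ℓ
    _ = _ := by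
        rw [← mul_assoc, Real.sqrt_mul' _ (Nat.cast_nonneg n)]
        ring

theorem symmdiff_bound_explicit_constant_general (d : ℕ) (ν : ℝ) (hν : 0 < ν)
    (b₂ : ℝ) (hb₂ : 0 < b₂)
    (hincr : ∀ (R : Set (Pt d)), R.Finite → ∀ j : ℕ, 1 ≤ j →
      ((symmDiff (coarse j R) (coarse (j - 1) R)).ncard : ℝ)
        ≤ b₂ * 2 ^ j * (extBoundary R).ncard) :
    ∀ (n ℓ : ℕ), 0 < ℓ →
      ∀ (R₁ R₂ : Set (Pt d)), R₁.Finite → R₂.Finite →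
        (extBoundary R₁).ncard ≤ n → (extBoundary R₂).ncard ≤ n →
        coarse ℓ R₁ = coarse ℓ R₂ →
        ν * Real.sqrt ((symmDiff R₁ R₂).ncard)
          ≤ ν * (2 * (Real.sqrt 2 + 1) * Real.sqrt (2 * b₂))
              * (2 : ℝ) ^ ((ℓ : ℝ) / 2) * Real.sqrt n := by
  intro n ℓ _ R₁ R₂ hR₁ hR₂ hn₁ hn₂ hcoarse
  have h₁ := sqrt_ncard_symmDiff_coarse_le hb₂.le hR₁ (hincr R₁ hR₁) hn₁ ℓ
  have h₂ := sqrt_ncard_symmDiff_coarse_le hb₂.le hR₂ (hincr R₂ hR₂) hn₂ ℓ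
  have hfin : ∀ {R : Set (Pt d)}, R.Finite → (symmDiff R (coarse ℓ R)).Finite :=
    fun hR => hR.symmDiff (coarse_finite ℓ hR)
  have key : √(symmDiff R₁ R₂).ncard
      ≤ 2 * (√(2 * b₂) * (√2 + 1) * (2 : ℝ) ^ ((ℓ : ℝ) / 2) * √n) :=
    calc √(symmDiff R₁ R₂).ncard
        ≤ √(symmDiff R₁ (coarse ℓ R₁)).ncard + √(symmDiff (coarse ℓ R₁) R₂).ncard :=
          sqrt_ncard_symmDiff_le (hfin hR₁) (by rw [hcoarse, symmDiff_comm]; exact hfin hR₂)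
      _ = √(symmDiff R₁ (coarse ℓ R₁)).ncard + √(symmDiff R₂ (coarse ℓ R₂)).ncard := by
          rw [hcoarse, symmDiff_comm (coarse ℓ R₂)]
      _ ≤ _ := by linarith
  calc ν * √(symmDiff R₁ R₂).ncard
      ≤ ν * (2 * (√(2 * b₂) * (√2 + 1) * (2 : ℝ) ^ ((ℓ : ℝ) / 2) * √n)) := by gcongr
    _ = _ := by ring

/-- given the coarse-graining increment bound
`|B_j(R) Δ B_{j-1}(R)| ≤ b₂ 2^j |∂R|` (with `B₀(R) = R`), if `|∂R₁|, |∂R₂| ≤ n` and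
`B_ℓ(R₁) = B_ℓ(R₂)` for some `ℓ > 0`, then for the metric `d(R₁,R₂) = ν |R₁ Δ R₂|^{1/2}`,
`d(R₁,R₂) ≤ ν b₃ 2^{ℓ/2} n^{1/2}` with `b₃ = 2(√2+1)√(2 b₂)`. -/
theorem symmdiff_bound_explicit_constant (d : ℕ) (hd : 1 ≤ d) (ν : ℝ) (hν : 0 < ν)
    (b₂ : ℝ) (hb₂ : 0 < b₂)
    (hincr : ∀ (R : Set (Pt d)), R.Finite → ∀ j : ℕ, 1 ≤ j →
      ((symmDiff (coarse j R) (coarse (j - 1) R)).ncard : ℝ)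
        ≤ b₂ * 2 ^ j * (extBoundary R).ncard) :
    ∀ (n ℓ : ℕ), 0 < ℓ →
      ∀ (R₁ R₂ : Set (Pt d)), R₁.Finite → R₂.Finite →
        (extBoundary R₁).ncard ≤ n → (extBoundary R₂).ncard ≤ n →
        coarse ℓ R₁ = coarse ℓ R₂ →
        ν * Real.sqrt ((symmDiff R₁ R₂).ncard)
          ≤ ν * (2 * (Real.sqrt 2 + 1) * Real.sqrt (2 * b₂))
              * (2 : ℝ) ^ ((ℓ : ℝ) / 2) * Real.sqrt n :=
  symmdiff_bound_explicit_constant_general d ν hν b₂ hb₂ hincr
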